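/- Let A be a commutative ℝ-algebra equipped with a Poisson bracket {·,·} : A × A → A (ℝ-bilinear, antisymmetric, satisfying the Jacobi identity and the Leibniz identity {f, gh} = {f,g}h + g{f,h}). Then there exists a unique A-linear map ρ from the module of Kähler differentials Ω_{A/ℝ} to the module of ℝ-derivations Der_ℝ(A) with ρ(d f) = {f, ·} for all f ∈ A, and there exists an ℝ-bilinear Lie bracket ⟦·,·⟧ on Ω_{A/ℝ} (antisymmetric and satisfying the Jacobi identity) such that ⟦d f, d g⟧ = d{f, g} and ⟦α, f·β⟧ = ρ(α)(f)·β + f·⟦α, β⟧ for all f, g ∈ A and α, β ∈ Ω_{A/ℝ}; moreover ρ(⟦α, β⟧) = [ρ(α), ρ(β)] for all α, β. -/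

import Mathlib

set_option maxHeartbeats 1000000
set_option maxRecDepth 8000

open KaehlerDifferential

namespace PoissonKaehler

variable {A : Type} [CommRing A] [Algebra ℝ A]

local notation "Ω" => KaehlerDifferential ℝ A
local notation "dd" => KaehlerDifferential.D ℝ A

/-- Extensionality for `A`-linear maps out of the Kähler differentials. -/
theorem extA {M : Type} [AddCommGroup M] [Module ℝ M] [Module A M] [IsScalarTower ℝ A M]
    {T T' : Ω →ₗ[A] M} (h : ∀ f : A, T (dd f) = T' (dd f)) : T = T' := by
  refine Derivation.liftKaehlerDifferential_unique T T' ?_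
  ext f
  simpa using h f

/-- Twisted module used to construct the Lie derivative on 1-forms. -/
def Tw (_X : Derivation ℝ A A) : Type :=
  KaehlerDifferential ℝ A × KaehlerDifferential ℝ A

variable {X : Derivation ℝ A A}

namespace Tw

def p1 (p : Tw X) : Ω := (p : Ω × Ω).1
def p2 (p : Tw X) : Ω := (p : Ω × Ω).2
def mk (x y : Ω) : Tw X := ((x, y) : Ω × Ω)

noncomputable instance : AddCommGroup (Tw X) :=
  inferInstanceAs (AddCommGroup ((KaehlerDifferential ℝ A) × (KaehlerDifferential ℝ A)))

noncomputable instance : Module ℝ (Tw X) :=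
  inferInstanceAs (Module ℝ ((KaehlerDifferential ℝ A) × (KaehlerDifferential ℝ A)))

theorem ext {p q : Tw X} (h1 : p.p1 = q.p1) (h2 : p.p2 = q.p2) : p = q :=
  Prod.ext h1 h2

noncomputable instance : SMul A (Tw X) := ⟨fun a p => mk (a • p.p1) (a • p.p2 + X a • p.p1)⟩

@[simp] theorem p1_smulA (a : A) (p : Tw X) : (a • p).p1 = a • p.p1 := rfl
@[simp] theorem p2_smulA (a : A) (p : Tw X) : (a • p).p2 = a • p.p2 + X a • p.p1 := rfl
@[simp] theorem p1_add (p q : Tw X) : (p + q).p1 = p.p1 + q.p1 := rfl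
@[simp] theorem p2_add (p q : Tw X) : (p + q).p2 = p.p2 + q.p2 := rfl
@[simp] theorem p1_zero : (0 : Tw X).p1 = 0 := rfl
@[simp] theorem p2_zero : (0 : Tw X).p2 = 0 := rfl
@[simp] theorem p1_smulR (r : ℝ) (p : Tw X) : (r • p).p1 = r • p.p1 := rfl
@[simp] theorem p2_smulR (r : ℝ) (p : Tw X) : (r • p).p2 = r • p.p2 := rfl
@[simp] theorem p1_mk (x y : Ω) : (mk (X := X) x y).p1 = x := rfl
@[simp] theorem p2_mk (x y : Ω) : (mk (X := X) x y).p2 = y := rfl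

noncomputable instance : Module A (Tw X) where
  one_smul p := ext (by rw [p1_smulA, one_smul]) (by
    rw [p2_smulA, one_smul, X.map_one_eq_zero, zero_smul, add_zero])
  mul_smul a b p := ext (by rw [p1_smulA, p1_smulA, p1_smulA, mul_smul]) (by
    simp only [p2_smulA, p1_smulA, X.leibniz, smul_eq_mul, add_smul, smul_add, smul_smul,
      mul_comm b (X a)]
    abel)
  smul_zero a := ext (by rw [p1_smulA, p1_zero, smul_zero]) (by
    rw [p2_smulA, p1_zero, p2_zero, smul_zero, smul_zero, add_zero])
  smul_add a p q := ext (by rw [p1_smulA, p1_add, p1_add, p1_smulA, p1_smulA, smul_add]) (by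
    rw [p2_smulA, p2_add, p1_add, p2_add, p2_smulA, p2_smulA, smul_add, smul_add]
    abel)
  add_smul a b p := ext (by rw [p1_smulA, p1_add, p1_smulA, p1_smulA, add_smul]) (by
    rw [p2_smulA, p2_add, p2_smulA, p2_smulA, X.map_add, add_smul, add_smul]
    abel)
  zero_smul p := ext (by rw [p1_smulA, zero_smul, p1_zero]) (by
    rw [p2_smulA, X.map_zero, zero_smul, zero_smul, zero_add, p2_zero])

instance : IsScalarTower ℝ A (Tw X) where
  smul_assoc r a p := ext (by rw [p1_smulA, p1_smulR, p1_smulA, smul_assoc]) (by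
    rw [p2_smulA, p2_smulR, p2_smulA, X.map_smul, smul_assoc, smul_assoc, smul_add r (a • p.p2) (X a • p.p1)])

end Tw

noncomputable section

/-- The derivation `f ↦ (d f, d (X f))` into the twisted module. -/
def twd (X : Derivation ℝ A A) : Derivation ℝ A (Tw X) where
  toFun f := Tw.mk (dd f) (dd (X f))
  map_add' f g := Tw.ext (by simp) (by simp)
  map_smul' r f := Tw.ext (by simp) (by simp [X.map_smul])
  map_one_eq_zero' := Tw.ext (by simp) (by simp [X.map_one_eq_zero])
  leibniz' a b := Tw.ext
    (by
      simp only [LinearMap.coe_mk, AddHom.coe_mk, Tw.p1_mk, Tw.p1_add, Tw.p1_smulA,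
        Derivation.leibniz])
    (by
      simp only [LinearMap.coe_mk, AddHom.coe_mk, Tw.p2_mk, Tw.p2_add, Tw.p2_smulA, Tw.p1_mk,
        X.leibniz, map_add, smul_eq_mul, Derivation.leibniz, smul_add]
      abel)

@[simp] theorem twd_apply (X : Derivation ℝ A A) (f : A) :
    twd X f = Tw.mk (dd f) (dd (X f)) := rfl

def sndL (X : Derivation ℝ A A) : Tw X →ₗ[ℝ] Ω where
  toFun := Tw.p2
  map_add' _ _ := rfl
  map_smul' _ _ := rfl

/-- The Lie derivative on Kähler differentials along a derivation. -/
noncomputable def LX (X : Derivation ℝ A A) : Ω →ₗ[ℝ] Ω :=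
  (sndL X).comp ((twd X).liftKaehlerDifferential.restrictScalars ℝ)

def fstA (X : Derivation ℝ A A) : Tw X →ₗ[A] Ω where
  toFun := Tw.p1
  map_add' _ _ := rfl
  map_smul' _ _ := rfl

theorem lift_fst (ω : Ω) : ((twd X).liftKaehlerDifferential ω).p1 = ω := by
  have h : (fstA X).comp (twd X).liftKaehlerDifferential = LinearMap.id := by
    refine extA fun f => ?_
    simp [fstA]
    rfl
  exact congrArg (fun T => T ω) h

@[simp] theorem LX_D (f : A) : LX X (dd f) = dd (X f) := by
  simp [LX, sndL]
  rfl

theorem LX_smul (f : A) (ω : Ω) : LX X (f • ω) = f • LX X ω + X f • ω := by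
  have h : (twd X).liftKaehlerDifferential (f • ω) = f • (twd X).liftKaehlerDifferential ω :=
    map_smul _ f ω
  simp only [LX, LinearMap.comp_apply, LinearMap.restrictScalars_apply, sndL, LinearMap.coe_mk,
    AddHom.coe_mk, h, Tw.p2_smulA, lift_fst]
  show Tw.p2 _ = f • Tw.p2 _ + X f • ω
  rw [Tw.p2_smulA, lift_fst]

instance : SMulCommClass ℝ A Ω :=
  ⟨fun r a x => by
    rw [← algebraMap_smul A r x, ← algebraMap_smul A r (a • x), smul_comm]⟩

theorem mem_spanR (ω : Ω) :
    ω ∈ Submodule.span ℝ {x : Ω | ∃ f g : A, f • dd g = x} := by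
  set N := Submodule.span ℝ {x : Ω | ∃ f g : A, f • dd g = x} with hN
  have hsm : ∀ (a : A) (x : Ω), x ∈ N → a • x ∈ N := by
    intro a x hx
    induction hx using Submodule.span_induction with
    | mem y hy =>
      obtain ⟨f, g, rfl⟩ := hy
      rw [smul_smul]
      exact Submodule.subset_span ⟨a * f, g, rfl⟩
    | zero => simpa using N.zero_mem
    | add y z _ _ hy hz => rw [smul_add]; exact N.add_mem hy hz
    | smul r y _ hy => rw [smul_comm]; exact N.smul_mem r hy
  have hmem : ω ∈ Submodule.span A (Set.range (dd)) := by
    rw [KaehlerDifferential.span_range_derivation]; trivial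
  induction hmem using Submodule.span_induction with
  | mem y hy =>
    obtain ⟨g, rfl⟩ := hy
    exact Submodule.subset_span ⟨1, g, one_smul A _⟩
  | zero => exact N.zero_mem
  | add y z _ _ hy hz => exact N.add_mem hy hz
  | smul a y _ hy => exact hsm a y hy

theorem extR {M : Type} [AddCommGroup M] [Module ℝ M]
    {T T' : Ω →ₗ[ℝ] M} (h : ∀ f g : A, T (f • dd g) = T' (f • dd g)) : T = T' := by
  refine LinearMap.ext fun ω => ?_
  have hmem := mem_spanR (A := A) ω
  induction hmem using Submodule.span_induction with
  | mem y hy => obtain ⟨f, g, rfl⟩ := hy; exact h f g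
  | zero => simp
  | add y z _ _ hy hz => rw [map_add, map_add, hy, hz]
  | smul r y _ hy => rw [map_smul, map_smul, hy]

theorem LX_addX (X Y : Derivation ℝ A A) : LX (X + Y) = LX X + LX Y := by
  refine extR fun f g => ?_
  simp only [LX_smul, LX_D, Derivation.add_apply, LinearMap.add_apply, map_add, smul_add,
    add_smul]
  abel

theorem LX_rsmul (r : ℝ) (X : Derivation ℝ A A) : LX (r • X) = r • LX X := by
  refine extR fun f g => ?_
  simp only [LX_smul, LX_D, Derivation.smul_apply, LinearMap.smul_apply, map_smul,
    Derivation.map_smul, smul_add]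
  rw [smul_comm r f, smul_assoc]

theorem LX_Asmul (h : A) (X : Derivation ℝ A A) (α : Ω) :
    LX (h • X) α = h • LX X α + X.liftKaehlerDifferential α • dd h := by
  have key : LX (h • X) =
      h • LX X + (X.liftKaehlerDifferential.restrictScalars ℝ).smulRight (dd h) := by
    refine extR fun f g => ?_
    simp only [LX_smul, LX_D, Derivation.smul_apply, LinearMap.add_apply, LinearMap.smul_apply,
      LinearMap.smulRight_apply, LinearMap.restrictScalars_apply, map_smul,
      Derivation.liftKaehlerDifferential_comp_D, smul_eq_mul, Derivation.leibniz, smul_add,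
      smul_smul, mul_comm]
    abel
  rw [key]
  simp

theorem lift_add {M : Type} [AddCommGroup M] [Module ℝ M] [Module A M] [IsScalarTower ℝ A M]
    (D D' : Derivation ℝ A M) :
    (D + D').liftKaehlerDifferential = D.liftKaehlerDifferential + D'.liftKaehlerDifferential :=
  extA fun f => by simp

theorem lift_smulA (a : A) (D : Derivation ℝ A A) :
    (a • D).liftKaehlerDifferential = a • D.liftKaehlerDifferential :=
  extA fun f => by simp

section Poisson

variable (pb : A →ₗ[ℝ] A →ₗ[ℝ] A)
  (hskew : ∀ f g : A, pb f g = -pb g f)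
  (hleib : ∀ f g h : A, pb f (g * h) = pb f g * h + g * pb f h)

/-- The Hamiltonian derivation `pb f`. -/
def pbDer (f : A) : Derivation ℝ A A where
  toLinearMap := pb f
  map_one_eq_zero' := by
    have h1 : pb f 1 = pb f 1 * 1 + 1 * pb f 1 := by simpa using hleib f 1 1
    have h2 : pb f 1 + 0 = pb f 1 + pb f 1 := by simpa using h1
    exact (add_left_cancel h2).symm
  leibniz' a b := by
    have := hleib f a b
    simp only [smul_eq_mul]
    rw [this, mul_comm (pb f a) b]
    ring

@[simp] theorem pbDer_apply (f g : A) : pbDer pb hleib f g = pb f g := rfl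

theorem pb_one (hleib : ∀ f g h : A, pb f (g * h) = pb f g * h + g * pb f h)
    (hskew : ∀ f g : A, pb f g = -pb g f) (g : A) : pb 1 g = 0 := by
  rw [hskew]
  have : pb g 1 = 0 := (pbDer pb hleib g).map_one_eq_zero
  rw [this, neg_zero]

/-- `f ↦ {f, ·}` as a derivation into derivations. -/
def rhoD : Derivation ℝ A (Derivation ℝ A A) where
  toFun f := pbDer pb hleib f
  map_add' f g := by
    ext h
    simp [Derivation.add_apply]
  map_smul' r f := by
    ext h
    simp [Derivation.smul_apply]
  map_one_eq_zero' := by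
    ext h
    simpa using pb_one pb hleib hskew h
  leibniz' a b := by
    ext h
    have h1 := hskew (a * b) h
    have h2 := hleib h a b
    have h3 := hskew a h
    have h4 := hskew b h
    simp only [LinearMap.coe_mk, AddHom.coe_mk, Derivation.add_apply, Derivation.smul_apply,
      pbDer_apply, smul_eq_mul]
    linear_combination h1 - h2 - b * h3 - a * h4

/-- The anchor map. -/
def rho : Ω →ₗ[A] Derivation ℝ A A :=
  (rhoD pb hskew hleib).liftKaehlerDifferential

@[simp] theorem rho_D (f : A) : rho pb hskew hleib (dd f) = pbDer pb hleib f :=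
  Derivation.liftKaehlerDifferential_comp_D _ _

theorem rho_D_apply (f g : A) : rho pb hskew hleib (dd f) g = pb f g := by
  rw [rho_D]; rfl

/-- The pairing `⟨α, ρ β⟩`. -/
def Pm : Ω →ₗ[A] Ω →ₗ[A] A where
  toFun α := (rho pb hskew hleib α).liftKaehlerDifferential
  map_add' α β := by rw [map_add, lift_add]
  map_smul' a α := by rw [map_smul, lift_smulA]; rfl

@[simp] theorem Pm_DD (f g : A) : Pm pb hskew hleib (dd f) (dd g) = pb f g := by
  simp only [Pm, LinearMap.coe_mk, AddHom.coe_mk, rho_D]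
  rw [Derivation.liftKaehlerDifferential_comp_D]
  rfl

theorem Pm_skew (α β : Ω) : Pm pb hskew hleib α β + Pm pb hskew hleib β α = 0 := by
  have h : Pm pb hskew hleib + (Pm pb hskew hleib).flip = 0 := by
    refine extA fun f => ?_
    refine extA fun g => ?_
    simp only [LinearMap.add_apply, LinearMap.flip_apply, LinearMap.zero_apply, Pm_DD]
    rw [hskew f g, neg_add_cancel]
  have := congrArg (fun T => T α β) h
  simpa using this

theorem Pm_eq_lift (β : Ω) :
    (rho pb hskew hleib β).liftKaehlerDifferential = Pm pb hskew hleib β := rfl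

theorem Pm_neg (α β : Ω) : Pm pb hskew hleib β α = - Pm pb hskew hleib α β := by
  rw [eq_neg_iff_add_eq_zero, add_comm]
  exact Pm_skew pb hskew hleib α β

/-- The Koszul bracket on Kähler differentials. -/
noncomputable def sb : Ω →ₗ[ℝ] Ω →ₗ[ℝ] Ω :=
  LinearMap.mk₂ ℝ
    (fun α β => LX (rho pb hskew hleib α) β - LX (rho pb hskew hleib β) α
      - dd (Pm pb hskew hleib α β))
    (fun α₁ α₂ β => by
      simp only [map_add, LX_addX, LinearMap.add_apply]
      abel)
    (fun r α β => by
      simp only [LinearMap.map_smul_of_tower, LX_rsmul, LinearMap.smul_apply, map_smul,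
        Derivation.map_smul]
      module)
    (fun α β₁ β₂ => by
      simp only [map_add, LX_addX, LinearMap.add_apply]
      abel)
    (fun r α β => by
      simp only [LinearMap.map_smul_of_tower, LX_rsmul, LinearMap.smul_apply, map_smul,
        Derivation.map_smul]
      module)

theorem sb_apply (α β : Ω) :
    sb pb hskew hleib α β = LX (rho pb hskew hleib α) β - LX (rho pb hskew hleib β) α
      - dd (Pm pb hskew hleib α β) := rfl

theorem sb_DD (f g : A) :
    sb pb hskew hleib (dd f) (dd g) = dd (pb f g) := by
  rw [sb_apply, rho_D, rho_D]
  have h1 : LX (pbDer pb hleib f) (dd g) = dd (pb f g) := by rw [LX_D]; rfl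
  have h2 : LX (pbDer pb hleib g) (dd f) = dd (pb g f) := by rw [LX_D]; rfl
  rw [h1, h2, Pm_DD, hskew g f, map_neg]
  abel

theorem sb_leib (f : A) (α β : Ω) :
    sb pb hskew hleib α (f • β)
      = rho pb hskew hleib α f • β + f • sb pb hskew hleib α β := by
  rw [sb_apply, sb_apply, LX_smul, map_smul, LX_Asmul, Pm_eq_lift]
  have hPm : Pm pb hskew hleib α (f • β) = f * Pm pb hskew hleib α β := by
    rw [map_smul]; rfl
  rw [hPm, Derivation.leibniz, Pm_neg pb hskew hleib α β, neg_smul]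
  module

theorem sb_skew (α β : Ω) : sb pb hskew hleib α β = - sb pb hskew hleib β α := by
  rw [eq_neg_iff_add_eq_zero, sb_apply, sb_apply, Pm_neg pb hskew hleib β α, map_neg]
  abel

theorem anchor (hjac : ∀ f g h : A, pb f (pb g h) = pb (pb f g) h + pb g (pb f h))
    (α β : Ω) (g : A) :
    rho pb hskew hleib (sb pb hskew hleib α β) g
      = rho pb hskew hleib α (rho pb hskew hleib β g)
        - rho pb hskew hleib β (rho pb hskew hleib α g) := by
  set R := rho pb hskew hleib with hR
  set S := sb pb hskew hleib with hS
  let Q : Ω → Ω → Prop := fun a b => ∀ g : A, R (S a b) g = R a (R b g) - R b (R a g)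
  have hQskew : ∀ a b, Q a b → Q b a := by
    intro a b h g
    have e : S b a = - S a b := by rw [hS, sb_skew]
    rw [e, map_neg, Derivation.neg_apply, h g]
    abel
  have hQsmul : ∀ (f : A) a b, Q a b → Q a (f • b) := by
    intro f a b h g
    have e : S a (f • b) = R a f • b + f • S a b := by rw [hS, hR, sb_leib]
    have hq := h g
    simp only [e, map_add, map_smul, Derivation.add_apply, Derivation.smul_apply,
      Derivation.leibniz, smul_eq_mul] at hq ⊢
    linear_combination f * hq
  have hQDD : ∀ f k : A, Q (dd f) (dd k) := by
    intro f k g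
    have e : S (dd f) (dd k) = dd (pb f k) := by rw [hS, sb_DD]
    rw [e, hR]
    simp only [rho_D, pbDer_apply]
    linear_combination -(hjac f k g)
  have hQzero : ∀ a, Q a 0 := by
    intro a g
    simp [Q]
  have hQadd : ∀ a b c, Q a b → Q a c → Q a (b + c) := by
    intro a b c hb hc g
    rw [map_add, map_add, map_add, Derivation.add_apply, Derivation.add_apply, map_add,
      Derivation.add_apply, hb g, hc g]
    abel
  have hQrsmul : ∀ (r : ℝ) a b, Q a b → Q a (r • b) := by
    intro r a b h g
    simp only [map_smul, LinearMap.map_smul_of_tower, Derivation.smul_apply,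
      Derivation.map_smul]
    rw [h g]
    module
  have step1 : ∀ (f : A) (b : Ω), Q (dd f) b := by
    intro f b
    induction (mem_spanR b) using Submodule.span_induction with
    | mem y hy =>
      obtain ⟨h', k, rfl⟩ := hy
      exact hQsmul h' _ _ (hQDD f k)
    | zero => exact hQzero _
    | add y z _ _ hy hz => exact hQadd _ _ _ hy hz
    | smul r y _ hy => exact hQrsmul r _ _ hy
  have step2 : ∀ a b : Ω, Q a b := by
    intro a b
    induction (mem_spanR a) using Submodule.span_induction with
    | mem y hy =>
      obtain ⟨h', k, rfl⟩ := hy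
      exact hQskew _ _ (hQsmul h' _ _ (hQskew _ _ (step1 k b)))
    | zero => exact hQskew _ _ (hQzero b)
    | add y z _ _ hy hz => exact hQskew _ _ (hQadd _ _ _ (hQskew _ _ hy) (hQskew _ _ hz))
    | smul r y _ hy => exact hQskew _ _ (hQrsmul r _ _ (hQskew _ _ hy))
  exact step2 α β g

theorem sb_jacobi (hjac : ∀ f g h : A, pb f (pb g h) = pb (pb f g) h + pb g (pb f h))
    (α β γ : Ω) :
    sb pb hskew hleib α (sb pb hskew hleib β γ)
      = sb pb hskew hleib (sb pb hskew hleib α β) γ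
        + sb pb hskew hleib β (sb pb hskew hleib α γ) := by
  set S := sb pb hskew hleib with hS
  set R := rho pb hskew hleib with hR
  let J : Ω → Ω → Ω → Ω := fun a b c => S a (S b c) - S (S a b) c - S b (S a c)
  suffices h : ∀ a b c : Ω, J a b c = 0 by
    have h2 := h α β γ
    simp only [J] at h2
    rw [sub_sub, sub_eq_zero] at h2
    exact h2
  have hsk : ∀ a b : Ω, S a b = - S b a := fun a b => sb_skew pb hskew hleib a b
  have hL : ∀ (x : Ω) (f : A) (y : Ω), S x (f • y) = R x f • y + f • S x y :=
    fun x f y => sb_leib pb hskew hleib f x y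
  have hA : ∀ (x y : Ω) (f : A), R (S x y) f = R x (R y f) - R y (R x f) :=
    fun x y f => anchor pb hskew hleib hjac x y f
  have hJ12 : ∀ a b c, J a b c = - J b a c := by
    intro a b c
    have e : S (S b a) c = - S (S a b) c := by
      rw [hsk b a, map_neg, LinearMap.neg_apply]
    simp only [J]
    rw [e]
    abel
  have hJ23 : ∀ a b c, J a b c = - J a c b := by
    intro a b c
    have e1 : S a (S c b) = - S a (S b c) := by rw [hsk c b, map_neg]
    have e2 : S (S a c) b = - S b (S a c) := hsk _ _
    have e3 : S c (S a b) = - S (S a b) c := hsk _ _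
    simp only [J]
    rw [e1, e2, e3]
    abel
  have hJ3s : ∀ (f : A) (a b c : Ω), J a b (f • c) = f • J a b c := by
    intro f a b c
    simp only [J]
    rw [hL b f c, hL a f c, (S a).map_add, (S b).map_add, hL a (R b f) c, hL a f (S b c),
      hL b (R a f) c, hL b f (S a c), hL (S a b) f c, hA a b f, sub_smul, smul_sub, smul_sub]
    abel
  have hJz3 : ∀ a b : Ω, J a b 0 = 0 := by
    intro a b
    simp only [J, map_zero]
    abel
  have hJadd3 : ∀ a b c d : Ω, J a b (c + d) = J a b c + J a b d := by
    intro a b c d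
    simp only [J, map_add]
    abel
  have hJr3 : ∀ (r : ℝ) (a b c : Ω), J a b (r • c) = r • J a b c := by
    intro r a b c
    simp only [J, map_smul]
    module
  have hbase : ∀ f k l : A, J (dd f) (dd k) (dd l) = 0 := by
    intro f k l
    simp only [J, hS, sb_DD]
    rw [hjac f k l, map_add]
    abel
  have step1 : ∀ (f k : A) (c : Ω), J (dd f) (dd k) c = 0 := by
    intro f k c
    induction (mem_spanR c) using Submodule.span_induction with
    | mem y hy =>
      obtain ⟨h', l, rfl⟩ := hy
      rw [hJ3s, hbase, smul_zero]
    | zero => exact hJz3 _ _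
    | add y z _ _ hy hz => rw [hJadd3, hy, hz, add_zero]
    | smul r y _ hy => rw [hJr3, hy, smul_zero]
  have hJadd2 : ∀ a y z c : Ω, J a (y + z) c = J a y c + J a z c := by
    intro a y z c
    rw [hJ23, hJadd3, neg_add, ← hJ23, ← hJ23]
  have hJr2 : ∀ (r : ℝ) (a y c : Ω), J a (r • y) c = r • J a y c := by
    intro r a y c
    rw [hJ23, hJr3, hJ23 a y c]
    module
  have hJz2 : ∀ a c : Ω, J a 0 c = 0 := by
    intro a c
    rw [hJ23, hJz3, neg_zero]
  have step2 : ∀ (f : A) (b c : Ω), J (dd f) b c = 0 := by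
    intro f b c
    induction (mem_spanR b) using Submodule.span_induction with
    | mem y hy =>
      obtain ⟨h', k, rfl⟩ := hy
      have h0 : J (dd f) c (dd k) = - J (dd f) (dd k) c := hJ23 _ _ _
      rw [hJ23, hJ3s, h0, step1]
      simp
    | zero => exact hJz2 _ _
    | add y z _ _ hy hz => rw [hJadd2, hy, hz, add_zero]
    | smul r y _ hy => rw [hJr2, hy, smul_zero]
  have hJadd1 : ∀ y z b c : Ω, J (y + z) b c = J y b c + J z b c := by
    intro y z b c
    rw [hJ12, hJadd2, neg_add, ← hJ12, ← hJ12]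
  have hJr1 : ∀ (r : ℝ) (y b c : Ω), J (r • y) b c = r • J y b c := by
    intro r y b c
    rw [hJ12, hJr2, hJ12 y b c]
    module
  have hJz1 : ∀ b c : Ω, J 0 b c = 0 := by
    intro b c
    rw [hJ12, hJz2, neg_zero]
  intro a b c
  induction (mem_spanR a) using Submodule.span_induction with
  | mem y hy =>
    obtain ⟨h', k, rfl⟩ := hy
    have h1 : J b c (dd k) = 0 := by
      have h2 : J b (dd k) c = - J (dd k) b c := hJ12 _ _ _
      rw [hJ23, h2, step2, neg_zero, neg_zero]
    rw [hJ12, hJ23, hJ3s, h1]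
    simp
  | zero => exact hJz1 _ _
  | add y z _ _ hy hz => rw [hJadd1, hy, hz, add_zero]
  | smul r y _ hy => rw [hJr1, hy, smul_zero]

end Poisson

end

end PoissonKaehler

/-- For a commutative ℝ-algebra `A` with a Poisson bracket
`{·,·}`, there is a unique `A`-linear map `ρ : Ω_{A/ℝ} → Der_ℝ(A)` with
`ρ(d f) = {f, ·}`, and an ℝ-bilinear Lie bracket `⟦·,·⟧` on the Kähler
differentials `Ω_{A/ℝ}` with `⟦d f, d g⟧ = d{f, g}`, satisfying the anchored
Leibniz rule `⟦α, f β⟧ = ρ(α)(f) β + f ⟦α, β⟧` and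
`ρ(⟦α, β⟧) = [ρ(α), ρ(β)]` (commutator of derivations). -/
theorem poisson_algebra_kaehler_lie_algebroid
    (A : Type) [CommRing A] [Algebra ℝ A]
    (pb : A →ₗ[ℝ] A →ₗ[ℝ] A)
    (hskew : ∀ f g : A, pb f g = -pb g f)
    (hjac : ∀ f g h : A, pb f (pb g h) = pb (pb f g) h + pb g (pb f h))
    (hleib : ∀ f g h : A, pb f (g * h) = pb f g * h + g * pb f h) :
    (∃! ρ : KaehlerDifferential ℝ A →ₗ[A] Derivation ℝ A A,
        ∀ f g : A, ρ (KaehlerDifferential.D ℝ A f) g = pb f g) ∧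
    (∃ ρ : KaehlerDifferential ℝ A →ₗ[A] Derivation ℝ A A,
        (∀ f g : A, ρ (KaehlerDifferential.D ℝ A f) g = pb f g) ∧
        ∃ sb : KaehlerDifferential ℝ A →ₗ[ℝ] KaehlerDifferential ℝ A →ₗ[ℝ]
            KaehlerDifferential ℝ A,
          (∀ α β, sb α β = -sb β α) ∧
          (∀ α β γ, sb α (sb β γ) = sb (sb α β) γ + sb β (sb α γ)) ∧
          (∀ f g : A, sb (KaehlerDifferential.D ℝ A f) (KaehlerDifferential.D ℝ A g) =
            KaehlerDifferential.D ℝ A (pb f g)) ∧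
          (∀ (f : A) (α β : KaehlerDifferential ℝ A),
            sb α (f • β) = (ρ α) f • β + f • sb α β) ∧
          (∀ (α β : KaehlerDifferential ℝ A) (g : A),
            ρ (sb α β) g = ρ α (ρ β g) - ρ β (ρ α g))) := by
  constructor
  · refine ⟨PoissonKaehler.rho pb hskew hleib,
      fun f g => PoissonKaehler.rho_D_apply pb hskew hleib f g, ?_⟩
    intro rho' h
    refine PoissonKaehler.extA fun f => ?_
    ext g
    rw [h f g, PoissonKaehler.rho_D_apply]
  · refine ⟨PoissonKaehler.rho pb hskew hleib,
      fun f g => PoissonKaehler.rho_D_apply pb hskew hleib f g,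
      PoissonKaehler.sb pb hskew hleib,
      fun α β => PoissonKaehler.sb_skew pb hskew hleib α β,
      fun α β γ => PoissonKaehler.sb_jacobi pb hskew hleib hjac α β γ,
      fun f g => PoissonKaehler.sb_DD pb hskew hleib f g,
      fun f α β => PoissonKaehler.sb_leib pb hskew hleib f α β,
      fun α β g => PoissonKaehler.anchor pb hskew hleib hjac α β g⟩
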